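/- arXiv:2209.03098 — 2 statements merged into one kernel-verified Lean document; each statement's English description precedes it below -/
import Mathlib

section
/- Let y₋, y₊ > 0 be real numbers, let H(X) = (y₋² + 1)X² + (3y₋² + y₊y₋ + 2)X + (y₊² + 3y₋² + 3y₊y₋ + 1) and R(X) = (3y₊² + y₋² + 3y₊y₋ + 1)X² + (3y₊² + y₊y₋ + 2)X + (y₊² + 1). Set δ = (y₋² + 1)(3y₊² + y₋² + 3y₊y₋ + 1), η = (y₊y₋(y₊² + y₋² + 3y₊y₋) + y₊² + y₋² + 1)/δ, and θ = ((y₋ + y₊)²(y₊² + y₋² + y₊y₋ + 1)(2y₊²y₋² + 3y₊² + 3y₋² + y₊y₋ + 3))/δ². Then δ > 0, η > 0, θ > 0, and the polynomial identity (X³H(X))'·R(X) − X³H(X)·R'(X) = 3δ·X²·(X + 1)²·((X + η)² + θ) holds in ℝ[X], so that the derivative of f(ξ) = ξ³H(ξ)/R(ξ) equals 3δξ²(ξ+1)²((ξ+η)²+θ)/R(ξ)² and is nonnegative on ℝ. -/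
/-!
The numerator `(X³H)'R − X³HR'` of `f'` is a sextic divisible by `X²`; once the denominators
`δ` and `δ²` of `η` and `θ` are cleared, its factorization is a polynomial identity in `y₋, y₊`.
The denominator `R` has discriminant `−(3y₊² + 4)(y₊ + y₋)² < 0`, so it never vanishes, `f` is
differentiable everywhere, and the quotient rule gives `f' = 3δX²(X+1)²((X+η)²+θ)/R²`.
-/

theorem hasDerivAt_quadratic {𝕜 : Type*} [NontriviallyNormedField 𝕜] (a b c x : 𝕜) :
    HasDerivAt (fun x => a * x ^ 2 + b * x + c) (a * (2 * x) + b) x := by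
  simpa using (((hasDerivAt_pow 2 x).const_mul a).add ((hasDerivAt_id x).const_mul b)).add_const c

theorem quadratic_ne_zero_of_discrim_neg {K : Type*} [CommRing K] [LinearOrder K]
    [IsStrictOrderedRing K] {a b c : K} (h : discrim a b c < 0) (x : K) :
    a * x ^ 2 + b * x + c ≠ 0 := by
  rw [sq]
  exact quadratic_ne_zero_of_discrim_ne_sq
    (fun s hs => (h.trans_le (hs ▸ sq_nonneg s)).false) x

namespace CellDoublet

variable (ym yp : ℝ)

def H (x : ℝ) : ℝ :=
  (ym ^ 2 + 1) * x ^ 2 + (3 * ym ^ 2 + yp * ym + 2) * x + (yp ^ 2 + 3 * ym ^ 2 + 3 * yp * ym + 1)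

def R (x : ℝ) : ℝ :=
  (3 * yp ^ 2 + ym ^ 2 + 3 * yp * ym + 1) * x ^ 2 + (3 * yp ^ 2 + yp * ym + 2) * x + (yp ^ 2 + 1)

def δ : ℝ := (ym ^ 2 + 1) * (3 * yp ^ 2 + ym ^ 2 + 3 * yp * ym + 1)

noncomputable def η : ℝ := (yp * ym * (yp ^ 2 + ym ^ 2 + 3 * yp * ym) + yp ^ 2 + ym ^ 2 + 1) / δ ym yp

noncomputable def θ : ℝ := ((ym + yp) ^ 2 * (yp ^ 2 + ym ^ 2 + yp * ym + 1) *
  (2 * yp ^ 2 * ym ^ 2 + 3 * yp ^ 2 + 3 * ym ^ 2 + yp * ym + 3)) / δ ym yp ^ 2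

theorem δ_pos : 0 < δ ym yp := by
  have : 0 < 3 * yp ^ 2 + ym ^ 2 + 3 * yp * ym + 1 := by
    nlinarith [sq_nonneg (2 * yp + ym), sq_nonneg yp]
  unfold δ
  positivity

theorem η_pos (h : 0 ≤ yp * ym) : 0 < η ym yp := by
  refine div_pos ?_ (δ_pos ym yp)
  nlinarith [mul_nonneg h (add_nonneg (add_nonneg (sq_nonneg yp) (sq_nonneg ym)) h)]

theorem θ_pos (h : ym + yp ≠ 0) : 0 < θ ym yp := by
  have h₁ : 0 < yp ^ 2 + ym ^ 2 + yp * ym + 1 := by nlinarith [sq_nonneg (yp + ym)]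
  have h₂ : 0 < 2 * yp ^ 2 * ym ^ 2 + 3 * yp ^ 2 + 3 * ym ^ 2 + yp * ym + 3 := by
    nlinarith [sq_nonneg (yp + ym), sq_nonneg (yp * ym)]
  have := δ_pos ym yp
  unfold θ
  positivity

theorem discrim_R :
    discrim (3 * yp ^ 2 + ym ^ 2 + 3 * yp * ym + 1) (3 * yp ^ 2 + yp * ym + 2) (yp ^ 2 + 1) =
      -((3 * yp ^ 2 + 4) * (yp + ym) ^ 2) := by
  unfold discrim
  ring

theorem R_ne_zero (h : ym + yp ≠ 0) (x : ℝ) : R ym yp x ≠ 0 := by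
  refine quadratic_ne_zero_of_discrim_neg ?_ x
  rw [discrim_R, neg_neg_iff_pos]
  have : yp + ym ≠ 0 := by rwa [add_comm]
  positivity

theorem hasDerivAt_cube_mul_H (x : ℝ) :
    HasDerivAt (fun ξ => ξ ^ 3 * H ym yp ξ)
      (3 * x ^ 2 * H ym yp x + x ^ 3 * ((ym ^ 2 + 1) * (2 * x) + (3 * ym ^ 2 + yp * ym + 2))) x :=
  ((hasDerivAt_pow 3 x).mul (hasDerivAt_quadratic _ _ _ x)).congr_deriv (by unfold H; ring)

theorem hasDerivAt_R (x : ℝ) :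
    HasDerivAt (R ym yp)
      ((3 * yp ^ 2 + ym ^ 2 + 3 * yp * ym + 1) * (2 * x) + (3 * yp ^ 2 + yp * ym + 2)) x :=
  hasDerivAt_quadratic _ _ _ x

theorem derivNumerator_eq (x : ℝ) :
    (3 * x ^ 2 * H ym yp x + x ^ 3 * ((ym ^ 2 + 1) * (2 * x) + (3 * ym ^ 2 + yp * ym + 2))) *
        R ym yp x -
      x ^ 3 * H ym yp x *
        ((3 * yp ^ 2 + ym ^ 2 + 3 * yp * ym + 1) * (2 * x) + (3 * yp ^ 2 + yp * ym + 2)) =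
      3 * δ ym yp * x ^ 2 * (x + 1) ^ 2 * ((x + η ym yp) ^ 2 + θ ym yp) := by
  have := (δ_pos ym yp).ne'
  unfold η θ
  field_simp
  unfold H R δ
  ring

end CellDoublet

/-- The explicit factorization of the numerator of `f'` where `f(ξ) = ξ³H(ξ)/R(ξ)`:
`δ, η, θ > 0`, the polynomial identity
`(X³H)'·R − X³H·R' = 3δX²(X+1)²((X+η)²+θ)` holds, hence
`f'(ξ) = 3δξ²(ξ+1)²((ξ+η)²+θ)/R(ξ)² ≥ 0`. -/
theorem stmt_3 (ym yp : ℝ) (hym : 0 < ym) (hyp : 0 < yp)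
    (H R f : ℝ → ℝ) (δ η θ : ℝ)
    (hH : H = fun x : ℝ =>
      (ym ^ 2 + 1) * x ^ 2 + (3 * ym ^ 2 + yp * ym + 2) * x +
        (yp ^ 2 + 3 * ym ^ 2 + 3 * yp * ym + 1))
    (hR : R = fun x : ℝ =>
      (3 * yp ^ 2 + ym ^ 2 + 3 * yp * ym + 1) * x ^ 2 + (3 * yp ^ 2 + yp * ym + 2) * x +
        (yp ^ 2 + 1))
    (hf : f = fun ξ : ℝ => ξ ^ 3 * H ξ / R ξ)
    (hδ : δ = (ym ^ 2 + 1) * (3 * yp ^ 2 + ym ^ 2 + 3 * yp * ym + 1))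
    (hη : η = (yp * ym * (yp ^ 2 + ym ^ 2 + 3 * yp * ym) + yp ^ 2 + ym ^ 2 + 1) / δ)
    (hθ : θ = ((ym + yp) ^ 2 * (yp ^ 2 + ym ^ 2 + yp * ym + 1) *
      (2 * yp ^ 2 * ym ^ 2 + 3 * yp ^ 2 + 3 * ym ^ 2 + yp * ym + 3)) / δ ^ 2) :
    0 < δ ∧ 0 < η ∧ 0 < θ ∧
    (∀ x : ℝ, deriv (fun ξ : ℝ => ξ ^ 3 * H ξ) x * R x - x ^ 3 * H x * deriv R x =
      3 * δ * x ^ 2 * (x + 1) ^ 2 * ((x + η) ^ 2 + θ)) ∧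
    (∀ x : ℝ,
      deriv f x = 3 * δ * x ^ 2 * (x + 1) ^ 2 * ((x + η) ^ 2 + θ) / (R x) ^ 2 ∧
      0 ≤ deriv f x) := by
  obtain rfl : H = CellDoublet.H ym yp := hH
  obtain rfl : R = CellDoublet.R ym yp := hR
  obtain rfl : δ = CellDoublet.δ ym yp := hδ
  obtain rfl : η = CellDoublet.η ym yp := hη
  obtain rfl : θ = CellDoublet.θ ym yp := hθ
  subst hf
  have hsum : ym + yp ≠ 0 := (add_pos hym hyp).ne'
  have hδ₀ := CellDoublet.δ_pos ym yp
  have hθ₀ := CellDoublet.θ_pos ym yp hsum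
  have hg := CellDoublet.hasDerivAt_cube_mul_H ym yp
  have hR' := CellDoublet.hasDerivAt_R ym yp
  have hN := CellDoublet.derivNumerator_eq ym yp
  refine ⟨hδ₀, CellDoublet.η_pos ym yp (mul_pos hyp hym).le, hθ₀, fun x => ?_, fun x => ?_⟩
  · rw [(hg x).deriv, (hR' x).deriv, hN]
  · have hf' : HasDerivAt (fun ξ => ξ ^ 3 * CellDoublet.H ym yp ξ / CellDoublet.R ym yp ξ) _ x :=
      (hg x).div (hR' x) (CellDoublet.R_ne_zero ym yp hsum x)
    rw [hN] at hf'
    rw [hf'.deriv]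
    exact ⟨rfl, by positivity⟩
end

section
/- Let t₁, t₂, t₃, κ > 0 and w₁, w₂ > 0, set w₃ = w₁ + w₂ and t_s = t₁ + t₂ + t₃. Suppose (z₁, z₂, z₃, y) ∈ ℝ⁴ with y > 0 satisfies the system: t₁(1−z₁²)/(1+z₁²) + t₂(1−z₂²)/(1+z₂²) + t₃(1−z₃²)/(1+z₃²) + κy = 0, t₁z₁/(1+z₁²) + t₂z₂/(1+z₂²) + t₃z₃/(1+z₃²) = 0, −z₁(z₁²+3) + z₃(z₃²+3) = w₁y³, and z₂(z₂²+3) − z₃(z₃²+3) = w₂y³. Then y ≥ 4^{1/3}/w₃^{1/3}, and the quantity u = (t_s/κ)·(w₃/2)^{1/3} satisfies u ≥ 3. -/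
/-!
Write `φ(z) = z (z² + 3)`. Since `φ` is strictly increasing, the volume equations force
`z₁ < z₃ < z₂`; the tangential balance is a vanishing positive combination of the
`z_k / (1 + z_k²)`, which have the signs of the `z_k`, so `z₁ < 0 < z₂`. With `m = max (-z₁) z₂`
every `z_k² ≤ m²`, and as `(z² - 1) / (1 + z²)` increases with `z²`, the normal balance gives
`0 < κ y ≤ t_s (m² - 1) / (1 + m²)`, hence `m > 1`. Since `φ` is odd,
`φ(m) ≤ φ(z₂) - φ(z₁) = w₃ y³`. The bound on `y` is then `4 ≤ φ(m)`, and the bound on `u` is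
`54 ((m² - 1) / (1 + m²))³ ≤ φ(m)`: cubing the normal balance, `54 κ³ y³ ≤ t_s³ w₃ y³`.
-/

open Real

/-- `(π/6) r³ capVolume z` is the volume of a spherical cap with base radius `r` and height
`z r`. -/
def capVolume (z : ℝ) : ℝ := z * (z ^ 2 + 3)

lemma capVolume_strictMono : StrictMono capVolume := by
  intro a b hab
  have hq : 0 < a ^ 2 + a * b + b ^ 2 + 3 := by nlinarith [sq_nonneg (a + b)]
  simp only [capVolume]
  nlinarith [mul_pos (sub_pos.2 hab) hq]

lemma capVolume_neg (z : ℝ) : capVolume (-z) = -capVolume z := by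
  simp only [capVolume]; ring

lemma capVolume_nonneg {z : ℝ} (hz : 0 ≤ z) : 0 ≤ capVolume z := by
  unfold capVolume; positivity

lemma capVolume_max_le {a b : ℝ} (ha : 0 ≤ a) (hb : 0 ≤ b) :
    capVolume (max a b) ≤ capVolume a + capVolume b := by
  rcases max_choice a b with h | h <;> rw [h]
  · linarith [capVolume_nonneg hb]
  · linarith [capVolume_nonneg ha]

lemma four_le_capVolume {m : ℝ} (hm : 1 ≤ m) : 4 ≤ capVolume m := by
  unfold capVolume; nlinarith

lemma fifty_four_mul_pow_three_le_capVolume {m : ℝ} (hm : 0 ≤ m) :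
    54 * ((m ^ 2 - 1) / (1 + m ^ 2)) ^ 3 ≤ capVolume m := by
  have hpoly : 54 * (m ^ 2 - 1) ^ 3 ≤ m * (m ^ 2 + 3) * (1 + m ^ 2) ^ 3 := by
    rcases le_total m 1 with h | h
    · have hneg : (m ^ 2 - 1) ^ 3 ≤ 0 := Odd.pow_nonpos (by decide) (by nlinarith)
      have hnonneg : 0 ≤ m * (m ^ 2 + 3) * (1 + m ^ 2) ^ 3 := by positivity
      linarith
    · obtain ⟨s, hs, rfl⟩ : ∃ s, 0 ≤ s ∧ m = 1 + s := ⟨m - 1, by linarith, by ring⟩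
      nlinarith [sq_nonneg (6 * s ^ 2 - 21 / 2), mul_nonneg hs (sq_nonneg (s ^ 2 + 3 * s - 4)),
        mul_nonneg (mul_nonneg hs hs) (sq_nonneg (s ^ 2 - 1)),
        mul_nonneg hs (sq_nonneg (s ^ 3 + 4 * s ^ 2 - 2)), sq_nonneg s, mul_nonneg hs hs,
        mul_nonneg hs (mul_nonneg hs hs)]
  rw [div_pow, ← mul_div_assoc, div_le_iff₀ (by positivity)]
  exact hpoly

lemma sq_sub_one_div_le {z m : ℝ} (h : z ^ 2 ≤ m ^ 2) :
    (z ^ 2 - 1) / (1 + z ^ 2) ≤ (m ^ 2 - 1) / (1 + m ^ 2) := by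
  rw [div_le_div_iff₀ (by positivity) (by positivity)]
  nlinarith

lemma mul_div_one_add_sq_pos_iff {t z : ℝ} (ht : 0 < t) : 0 < t * z / (1 + z ^ 2) ↔ 0 < z := by
  rw [div_pos_iff_of_pos_right (by positivity), mul_pos_iff_of_pos_left ht]

lemma mul_div_one_add_sq_neg_iff {t z : ℝ} (ht : 0 < t) : t * z / (1 + z ^ 2) < 0 ↔ z < 0 := by
  have h := mul_div_one_add_sq_pos_iff ht (z := -z)
  rwa [mul_neg, neg_div, neg_sq, neg_pos, neg_pos] at h

lemma cbrt_le_iff {x y : ℝ} (hx : 0 ≤ x) (hy : 0 ≤ y) : x ^ ((1 : ℝ) / 3) ≤ y ↔ x ≤ y ^ 3 := by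
  rw [one_div, rpow_inv_le_iff_of_pos hx hy three_pos, rpow_ofNat]

lemma le_cbrt_iff {x y : ℝ} (hx : 0 ≤ x) (hy : 0 ≤ y) : x ≤ y ^ ((1 : ℝ) / 3) ↔ x ^ 3 ≤ y := by
  rw [one_div, le_rpow_inv_iff_of_pos hx hy three_pos, rpow_ofNat]

section Doublet

variable {t₁ t₂ t₃ κ w₁ w₂ z₁ z₂ z₃ y : ℝ}

lemma neg_and_pos_of_tangential_balance (ht₁ : 0 < t₁) (ht₂ : 0 < t₂) (ht₃ : 0 < t₃)
    (h₁₃ : z₁ < z₃) (h₃₂ : z₃ < z₂)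
    (h : t₁ * z₁ / (1 + z₁ ^ 2) + t₂ * z₂ / (1 + z₂ ^ 2) + t₃ * z₃ / (1 + z₃ ^ 2) = 0) :
    z₁ < 0 ∧ 0 < z₂ := by
  constructor
  · by_contra! hz₁
    have e₁ := not_lt.1 (mt (mul_div_one_add_sq_neg_iff ht₁).1 (not_lt.2 hz₁))
    have e₂ := (mul_div_one_add_sq_pos_iff ht₂).2 (hz₁.trans_lt (h₁₃.trans h₃₂))
    have e₃ := (mul_div_one_add_sq_pos_iff ht₃).2 (hz₁.trans_lt h₁₃)
    linarith
  · by_contra! hz₂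
    have e₁ := (mul_div_one_add_sq_neg_iff ht₁).2 ((h₁₃.trans h₃₂).trans_le hz₂)
    have e₂ := not_lt.1 (mt (mul_div_one_add_sq_pos_iff ht₂).1 (not_lt.2 hz₂))
    have e₃ := (mul_div_one_add_sq_neg_iff ht₃).2 (h₃₂.trans_le hz₂)
    linarith

lemma normal_balance_le {m : ℝ} (ht₁ : 0 < t₁) (ht₂ : 0 < t₂) (ht₃ : 0 < t₃)
    (hm₁ : z₁ ^ 2 ≤ m ^ 2) (hm₂ : z₂ ^ 2 ≤ m ^ 2) (hm₃ : z₃ ^ 2 ≤ m ^ 2)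
    (h : t₁ * (1 - z₁ ^ 2) / (1 + z₁ ^ 2) + t₂ * (1 - z₂ ^ 2) / (1 + z₂ ^ 2) +
      t₃ * (1 - z₃ ^ 2) / (1 + z₃ ^ 2) + κ * y = 0) :
    κ * y ≤ (t₁ + t₂ + t₃) * ((m ^ 2 - 1) / (1 + m ^ 2)) := by
  have hκy : κ * y = t₁ * ((z₁ ^ 2 - 1) / (1 + z₁ ^ 2)) + t₂ * ((z₂ ^ 2 - 1) / (1 + z₂ ^ 2)) +
      t₃ * ((z₃ ^ 2 - 1) / (1 + z₃ ^ 2)) := by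
    linear_combination h
  have h₁ := mul_le_mul_of_nonneg_left (sq_sub_one_div_le hm₁) ht₁.le
  have h₂ := mul_le_mul_of_nonneg_left (sq_sub_one_div_le hm₂) ht₂.le
  have h₃ := mul_le_mul_of_nonneg_left (sq_sub_one_div_le hm₃) ht₃.le
  rw [hκy, add_mul, add_mul]
  linarith

lemma exists_dominant_tangent (ht₁ : 0 < t₁) (ht₂ : 0 < t₂) (ht₃ : 0 < t₃) (hκ : 0 < κ)
    (hw₁ : 0 < w₁) (hw₂ : 0 < w₂) (hy : 0 < y)
    (heq₁ : t₁ * (1 - z₁ ^ 2) / (1 + z₁ ^ 2) + t₂ * (1 - z₂ ^ 2) / (1 + z₂ ^ 2) +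
      t₃ * (1 - z₃ ^ 2) / (1 + z₃ ^ 2) + κ * y = 0)
    (heq₂ : t₁ * z₁ / (1 + z₁ ^ 2) + t₂ * z₂ / (1 + z₂ ^ 2) + t₃ * z₃ / (1 + z₃ ^ 2) = 0)
    (heq₃ : -z₁ * (z₁ ^ 2 + 3) + z₃ * (z₃ ^ 2 + 3) = w₁ * y ^ 3)
    (heq₄ : z₂ * (z₂ ^ 2 + 3) - z₃ * (z₃ ^ 2 + 3) = w₂ * y ^ 3) :
    ∃ m, 1 < m ∧ κ * y ≤ (t₁ + t₂ + t₃) * ((m ^ 2 - 1) / (1 + m ^ 2)) ∧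
      capVolume m ≤ (w₁ + w₂) * y ^ 3 := by
  have hy₃ := pow_pos hy 3
  have h₁₃ : z₁ < z₃ := capVolume_strictMono.lt_iff_lt.1 <| by
    simp only [capVolume]; nlinarith [mul_pos hw₁ hy₃]
  have h₃₂ : z₃ < z₂ := capVolume_strictMono.lt_iff_lt.1 <| by
    simp only [capVolume]; nlinarith [mul_pos hw₂ hy₃]
  obtain ⟨hz₁, hz₂⟩ := neg_and_pos_of_tangential_balance ht₁ ht₂ ht₃ h₁₃ h₃₂ heq₂
  set m := max (-z₁) z₂
  have hm₁ : -z₁ ≤ m := le_max_left _ _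
  have hm₂ : z₂ ≤ m := le_max_right _ _
  have hnormal : κ * y ≤ (t₁ + t₂ + t₃) * ((m ^ 2 - 1) / (1 + m ^ 2)) :=
    normal_balance_le ht₁ ht₂ ht₃ (sq_le_sq' (by linarith) (by linarith))
      (sq_le_sq' (by linarith) hm₂) (sq_le_sq' (by linarith) (by linarith)) heq₁
  refine ⟨m, ?_, hnormal, ?_⟩
  · have hpos : 0 < (m ^ 2 - 1) / (1 + m ^ 2) :=
      pos_of_mul_pos_right ((mul_pos hκ hy).trans_le hnormal) (by positivity)
    have : 1 < m ^ 2 := by linarith [(div_pos_iff_of_pos_right (by positivity)).1 hpos]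
    nlinarith
  · calc capVolume m ≤ capVolume (-z₁) + capVolume z₂ := capVolume_max_le (by linarith) hz₂.le
      _ = (w₁ + w₂) * y ^ 3 := by
        rw [capVolume_neg]; simp only [capVolume]; linear_combination heq₃ + heq₄

end Doublet

lemma fifty_four_mul_pow_three_le_of_balance {κ y T w m : ℝ} (hκ : 0 < κ) (hy : 0 < y)
    (hm : 0 ≤ m) (hT : 0 ≤ T) (hnormal : κ * y ≤ T * ((m ^ 2 - 1) / (1 + m ^ 2)))
    (hvol : capVolume m ≤ w * y ^ 3) : 54 * κ ^ 3 ≤ T ^ 3 * w := by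
  have h : 54 * κ ^ 3 * y ^ 3 ≤ T ^ 3 * w * y ^ 3 :=
    calc 54 * κ ^ 3 * y ^ 3 = 54 * (κ * y) ^ 3 := by ring
      _ ≤ 54 * (T * ((m ^ 2 - 1) / (1 + m ^ 2))) ^ 3 := by gcongr
      _ = T ^ 3 * (54 * ((m ^ 2 - 1) / (1 + m ^ 2)) ^ 3) := by ring
      _ ≤ T ^ 3 * capVolume m := by gcongr; exact fifty_four_mul_pow_three_le_capVolume hm
      _ ≤ T ^ 3 * (w * y ^ 3) := by gcongr
      _ = T ^ 3 * w * y ^ 3 := by ring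
  exact le_of_mul_le_mul_right h (pow_pos hy 3)

/-- Necessary conditions for the reduced critical-point system of a doublet with line
tension to have a real solution with `y > 0`: `y ≥ 4^{1/3}/w₃^{1/3}` and
`u = (t_s/κ)(w₃/2)^{1/3} ≥ 3`. -/
theorem stmt_17 (t₁ t₂ t₃ κ w₁ w₂ : ℝ) (ht₁ : 0 < t₁) (ht₂ : 0 < t₂) (ht₃ : 0 < t₃)
    (hκ : 0 < κ) (hw₁ : 0 < w₁) (hw₂ : 0 < w₂)
    (z₁ z₂ z₃ y : ℝ) (hy : 0 < y)
    (heq₁ : t₁ * (1 - z₁ ^ 2) / (1 + z₁ ^ 2) + t₂ * (1 - z₂ ^ 2) / (1 + z₂ ^ 2) +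
      t₃ * (1 - z₃ ^ 2) / (1 + z₃ ^ 2) + κ * y = 0)
    (heq₂ : t₁ * z₁ / (1 + z₁ ^ 2) + t₂ * z₂ / (1 + z₂ ^ 2) + t₃ * z₃ / (1 + z₃ ^ 2) = 0)
    (heq₃ : -z₁ * (z₁ ^ 2 + 3) + z₃ * (z₃ ^ 2 + 3) = w₁ * y ^ 3)
    (heq₄ : z₂ * (z₂ ^ 2 + 3) - z₃ * (z₃ ^ 2 + 3) = w₂ * y ^ 3) :
    (4 : ℝ) ^ ((1 : ℝ) / 3) / (w₁ + w₂) ^ ((1 : ℝ) / 3) ≤ y ∧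
    3 ≤ (t₁ + t₂ + t₃) / κ * ((w₁ + w₂) / 2) ^ ((1 : ℝ) / 3) := by
  obtain ⟨m, hm, hnormal, hvol⟩ :=
    exists_dominant_tangent ht₁ ht₂ ht₃ hκ hw₁ hw₂ hy heq₁ heq₂ heq₃ heq₄
  have hw : 0 < w₁ + w₂ := by linarith
  have ht : 0 < t₁ + t₂ + t₃ := by linarith
  constructor
  · rw [← div_rpow (by norm_num) hw.le, cbrt_le_iff (by positivity) hy.le, div_le_iff₀ hw]
    linarith [four_le_capVolume hm.le]
  · have h54 := fifty_four_mul_pow_three_le_of_balance hκ hy (by linarith) ht.le hnormal hvol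
    rw [← div_le_iff₀' (div_pos ht hκ), le_cbrt_iff (by positivity) (by positivity),
      div_div_eq_mul_div, div_pow, div_le_div_iff₀ (by positivity) two_pos]
    linarith
end
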